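/- arXiv:1808.10467 — 2 statements merged into one kernel-verified Lean document; each statement's English description precedes it below -/
import Mathlib

section
/- For every n ≥ 6, the asymmetric index of the cycle graph on n vertices satisfies ai(C_n) = 2. -/
/-- A simple graph is *asymmetric* if its only automorphism is the identity. -/
def SimpleGraph.IsAsymmetric {V : Type*} (G : SimpleGraph V) : Prop :=
  ∀ f : G ≃g G, ∀ v : V, f v = v

/-- The *asymmetric index* `ai(G)`: the minimum, over all asymmetric graphs `G'` on the
same vertex set, of the number of edges in which `G` and `G'` differ (edges removed plus
edges added); `⊤` (infinity) if no asymmetric graph on the vertex set exists. -/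
noncomputable def SimpleGraph.asymIndex {V : Type*} (G : SimpleGraph V) : ℕ∞ :=
  sInf {n : ℕ∞ | ∃ G' : SimpleGraph V, G'.IsAsymmetric ∧
    n = (symmDiff G.edgeSet G'.edgeSet).encard}

/-- The cycle graph `C_n` on vertex set `ZMod n`: `x` is adjacent to `y` iff
`x - y ≡ ±1 (mod n)`. -/
def SimpleGraph.cycleGraphZMod (n : ℕ) : SimpleGraph (ZMod n) :=
  SimpleGraph.fromRel (fun x y => x - y = 1)

/-!
If `G'` differs from `C_n` in at most one edge `{a, b}`, the reflection `x ↦ a + b - x` of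
`ZMod n` is an automorphism of both `C_n` and `G'`, and it is not the identity because `2 ≠ 0`.

Conversely, adding the chords `{0, -2}` and `{0, -3}` to `C_n` gives an asymmetric graph. An
automorphism fixes `0`, the only vertex of degree `4`; it fixes `1`, the only neighbour of `0`
with which `0` has no common neighbour (this is where `n ≥ 6` enters); and then it fixes
`2, 3, …` in turn, since a vertex `v ≠ 0` is adjacent only to `v - 1`, `v + 1` and possibly `0`.
-/

theorem ZMod.ofNat_ne_zero_of_lt {n : ℕ} (k : ℕ) [k.AtLeastTwo] (hk : k < n) :
    (OfNat.ofNat k : ZMod n) ≠ 0 := by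
  rw [← Nat.cast_ofNat, Ne, ZMod.natCast_eq_zero_iff]
  exact Nat.not_dvd_of_pos_of_lt (Nat.pos_of_neZero k) hk

theorem exists_sub_ne_self {R : Type*} [CommRing R] (h2 : (2 : R) ≠ 0) (c : R) :
    ∃ x, c - x ≠ x := by
  by_contra! h
  exact h2 (by linear_combination h 0 - h 1)

namespace SimpleGraph

variable {V W : Type*} {G : SimpleGraph V} {G' : SimpleGraph W}

theorem Iso.encard_neighborSet (f : G ≃g G') (v : V) :
    (G'.neighborSet (f v)).encard = (G.neighborSet v).encard := by
  rw [← f.toEmbedding.preimage_neighborSet v]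
  exact (Set.encard_preimage_of_injective_subset_range f.injective
    (by simp [f.surjective.range_eq])).symm

theorem Iso.commonNeighbors_nonempty_iff (f : G ≃g G') (v w : V) :
    (G'.commonNeighbors (f v) (f w)).Nonempty ↔ (G.commonNeighbors v w).Nonempty := by
  constructor
  · rintro ⟨x, hv, hw⟩
    refine ⟨f.symm x, ?_, ?_⟩ <;>
      simpa [mem_neighborSet, ← f.map_adj_iff (v := v), ← f.map_adj_iff (v := w)]
  · rintro ⟨x, hv, hw⟩
    exact ⟨f x, f.map_adj_iff.2 hv, f.map_adj_iff.2 hw⟩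

theorem Iso.apply_eq_self_of_adj (f : G ≃g G) {v w : V} (hv : f v = v) (hw : G.Adj v w)
    (h : ∀ x, G.Adj v x → x ≠ w → f x = x) : f w = w := by
  by_contra hne
  have hfw : G.Adj v (f w) := by simpa [hv] using f.map_adj_iff.2 hw
  exact hne (f.injective (h _ hfw hne))

variable {G₁ : SimpleGraph V}

def Iso.ofSymmDiffSubsetSingleton (σ : G ≃g G) {e : Sym2 V} (he : e.map σ = e)
    (hD : symmDiff G.edgeSet G₁.edgeSet ⊆ {e}) : G₁ ≃g G₁ where
  toEquiv := σ.toEquiv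
  map_rel_iff' {x y} := by
    have agree : ∀ e', e' ≠ e → (e' ∈ G.edgeSet ↔ e' ∈ G₁.edgeSet) := fun e' hne => by
      by_contra h
      exact hne (hD (Set.mem_symmDiff.2 (by tauto)))
    change s(σ x, σ y) ∈ G₁.edgeSet ↔ s(x, y) ∈ G₁.edgeSet
    by_cases hxy : s(x, y) = e
    · rw [show s(σ x, σ y) = e from (Sym2.map_mk σ x y).symm.trans (hxy ▸ he), hxy]
    · have hσ : s(σ x, σ y) ≠ e := fun h => hxy <|
        Sym2.map.injective σ.injective ((Sym2.map_mk σ x y).trans (h.trans he.symm))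
      rw [← agree _ hσ, ← agree _ hxy]
      exact σ.map_adj_iff

theorem symmDiff_edgeSet_sup_fromEdgeSet {s : Set (Sym2 V)} (hG : Disjoint s G.edgeSet)
    (hdiag : Disjoint s Sym2.diagSet) : symmDiff G.edgeSet (G ⊔ fromEdgeSet s).edgeSet = s := by
  rw [edgeSet_sup, edgeSet_fromEdgeSet, hdiag.sdiff_eq_left, symmDiff_of_le Set.subset_union_left,
    Set.union_sdiff_left, hG.sdiff_eq_left]

theorem Iso.apply_eq_self_of_apply_zero_of_apply_one {n : ℕ} [NeZero n] {G : SimpleGraph (ZMod n)}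
    (hsucc : ∀ v, G.Adj v (v + 1))
    (hnbr : ∀ v x, v ≠ 0 → G.Adj v x → x = v + 1 ∨ x = v - 1 ∨ x = 0)
    (f : G ≃g G) (h0 : f 0 = 0) (h1 : f 1 = 1) (v : ZMod n) : f v = v := by
  suffices h : ∀ k : ℕ, f k = k ∧ f (k + 1) = k + 1 by
    simpa using (h v.val).1
  intro k
  induction k with
  | zero => simpa using ⟨h0, h1⟩
  | succ k ih =>
    push_cast
    refine ⟨ih.2, ?_⟩
    by_cases hk : (k : ZMod n) + 1 = 0
    · rwa [hk, zero_add]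
    refine f.apply_eq_self_of_adj ih.2 (hsucc _) fun x hx hne => ?_
    rcases hnbr _ x hk hx with rfl | rfl | rfl
    · exact absurd rfl hne
    · simpa using ih.1
    · exact h0

namespace cycleGraphZMod

variable {n : ℕ}

theorem adj_iff [Nontrivial (ZMod n)] {x y : ZMod n} :
    (cycleGraphZMod n).Adj x y ↔ y = x + 1 ∨ y = x - 1 := by
  rw [cycleGraphZMod, fromRel_adj]
  constructor
  · rintro ⟨-, h | h⟩
    · exact Or.inr (by linear_combination -h)
    · exact Or.inl (by linear_combination h)
  · rintro (h | h) <;> subst h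
    · exact ⟨by simp, Or.inr (by ring)⟩
    · exact ⟨fun h => one_ne_zero (sub_eq_self.1 h.symm), Or.inl (by ring)⟩

theorem adj_add_one [Nontrivial (ZMod n)] (x : ZMod n) : (cycleGraphZMod n).Adj x (x + 1) :=
  adj_iff.2 (Or.inl rfl)

def reflection [Nontrivial (ZMod n)] (c : ZMod n) : cycleGraphZMod n ≃g cycleGraphZMod n where
  toEquiv := Equiv.subLeft c
  map_rel_iff' {x y} := by
    simp only [Equiv.subLeft_apply, adj_iff]
    constructor <;> rintro (h | h)
    exacts [Or.inr (by linear_combination -h), Or.inl (by linear_combination -h),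
      Or.inr (by linear_combination -h), Or.inl (by linear_combination -h)]

/-- An edge `{a, b}` is fixed by the reflection `x ↦ a + b - x` of the cycle, so changing at most
one edge of `C_n` leaves a nontrivial automorphism. -/
theorem two_le_encard_symmDiff_edgeSet (h2 : (2 : ZMod n) ≠ 0) {G : SimpleGraph (ZMod n)}
    (hG : G.IsAsymmetric) : 2 ≤ (symmDiff (cycleGraphZMod n).edgeSet G.edgeSet).encard := by
  have := nontrivial_of_ne _ _ h2
  by_contra! h
  obtain ⟨e, hD⟩ : ∃ e, symmDiff (cycleGraphZMod n).edgeSet G.edgeSet ⊆ {e} := by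
    rcases Set.encard_le_one_iff_eq.1 (Order.le_of_lt_add_one h) with hD | ⟨e, hD⟩
    exacts [⟨s(0, 0), hD ▸ Set.empty_subset _⟩, ⟨e, hD.le⟩]
  induction e using Sym2.ind with
  | _ a b =>
    have he : s(a, b).map (reflection (a + b)) = s(a, b) := by
      change s(a + b - a, a + b - b) = s(a, b)
      rw [add_sub_cancel_left, add_sub_cancel_right, Sym2.eq_swap]
    obtain ⟨x, hx⟩ := exists_sub_ne_self h2 (a + b)
    exact hx (hG ((reflection (a + b)).ofSymmDiffSubsetSingleton he hD) x)

end cycleGraphZMod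

def chordedCycleZMod (n : ℕ) : SimpleGraph (ZMod n) :=
  cycleGraphZMod n ⊔ fromEdgeSet {s(0, -2), s(0, -3)}

namespace chordedCycleZMod

variable {n : ℕ}

theorem encard_symmDiff_edgeSet (hn : 6 ≤ n) :
    (symmDiff (cycleGraphZMod n).edgeSet (chordedCycleZMod n).edgeSet).encard = 2 := by
  have : Fact (1 < n) := ⟨by omega⟩
  have h2 := ZMod.ofNat_ne_zero_of_lt (n := n) 2 (by omega)
  have h3 := ZMod.ofNat_ne_zero_of_lt (n := n) 3 (by omega)
  have h4 := ZMod.ofNat_ne_zero_of_lt (n := n) 4 (by omega)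
  have hcycle : Disjoint {s(0, -2), s(0, -3)} (cycleGraphZMod n).edgeSet := by
    rw [Set.disjoint_left]
    rintro _ (rfl | rfl) <;> rw [mem_edgeSet, cycleGraphZMod.adj_iff] <;> rintro (h | h)
    exacts [h3 (by linear_combination -h), one_ne_zero (by linear_combination -h),
      h4 (by linear_combination -h), h2 (by linear_combination -h)]
  have hdiag : Disjoint {s((0 : ZMod n), -2), s(0, -3)} Sym2.diagSet := by
    rw [Set.disjoint_left]
    rintro _ (rfl | rfl) <;> rw [Sym2.mem_diagSet, Sym2.mk_isDiag_iff] <;> intro h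
    exacts [h2 (by linear_combination h), h3 (by linear_combination h)]
  rw [chordedCycleZMod, symmDiff_edgeSet_sup_fromEdgeSet hcycle hdiag, Set.encard_pair]
  rw [Ne, Sym2.eq_iff]
  rintro (⟨-, h⟩ | ⟨-, h⟩)
  exacts [one_ne_zero (by linear_combination h), h2 (by linear_combination -h)]

theorem adj_of_add_one_eq [Nontrivial (ZMod n)] {x y : ZMod n} (h : x + 1 = y) :
    (chordedCycleZMod n).Adj x y :=
  Or.inl (h ▸ cycleGraphZMod.adj_add_one x)

theorem adj_zero_neg_two (hn : 6 ≤ n) : (chordedCycleZMod n).Adj 0 (-2) :=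
  Or.inr ⟨by simp, fun h =>
    ZMod.ofNat_ne_zero_of_lt (n := n) 2 (by omega) (by linear_combination h)⟩

theorem adj_zero_neg_three (hn : 6 ≤ n) : (chordedCycleZMod n).Adj 0 (-3) :=
  Or.inr ⟨by simp, fun h =>
    ZMod.ofNat_ne_zero_of_lt (n := n) 3 (by omega) (by linear_combination h)⟩

theorem eq_of_adj [Nontrivial (ZMod n)] {v x : ZMod n} (h : (chordedCycleZMod n).Adj v x) :
    x = v + 1 ∨ x = v - 1 ∨ x = 0 ∨ (v = 0 ∧ (x = -2 ∨ x = -3)) := by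
  rcases h with h | h
  · rcases cycleGraphZMod.adj_iff.1 h with h | h
    exacts [Or.inl h, Or.inr (Or.inl h)]
  · simp only [fromEdgeSet_adj, Set.mem_insert_iff, Set.mem_singleton_iff, Sym2.eq_iff] at h
    tauto

theorem eq_of_adj_of_ne_zero [Nontrivial (ZMod n)] {v x : ZMod n} (hv : v ≠ 0)
    (h : (chordedCycleZMod n).Adj v x) : x = v + 1 ∨ x = v - 1 ∨ x = 0 := by
  have := eq_of_adj h
  tauto

theorem eq_of_adj_zero [Nontrivial (ZMod n)] {x : ZMod n} (h : (chordedCycleZMod n).Adj 0 x) :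
    x = 1 ∨ x = -1 ∨ x = -2 ∨ x = -3 := by
  rcases eq_of_adj h with rfl | rfl | rfl | ⟨-, h⟩
  · exact Or.inl (zero_add 1)
  · exact Or.inr (Or.inl (zero_sub 1))
  · exact (h.ne rfl).elim
  · exact Or.inr (Or.inr h)

theorem encard_neighborSet_le_three [Nontrivial (ZMod n)] {v : ZMod n} (hv : v ≠ 0) :
    ((chordedCycleZMod n).neighborSet v).encard ≤ 3 :=
  calc ((chordedCycleZMod n).neighborSet v).encard
    _ ≤ ({v + 1, v - 1, 0} : Set (ZMod n)).encard :=
      Set.encard_le_encard fun _ hx => eq_of_adj_of_ne_zero hv hx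
    _ ≤ 3 := by
      grw [Set.encard_insert_le, Set.encard_insert_le, Set.encard_singleton]
      rfl

theorem four_le_encard_neighborSet_zero (hn : 6 ≤ n) :
    4 ≤ ((chordedCycleZMod n).neighborSet 0).encard := by
  have : Fact (1 < n) := ⟨by omega⟩
  have h2 := ZMod.ofNat_ne_zero_of_lt (n := n) 2 (by omega)
  have h3 := ZMod.ofNat_ne_zero_of_lt (n := n) 3 (by omega)
  have h4 := ZMod.ofNat_ne_zero_of_lt (n := n) 4 (by omega)
  calc (4 : ℕ∞)
    _ = ({1, -1, -2, -3} : Set (ZMod n)).encard := by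
      refine (Set.encard_eq_four.2 ⟨1, -1, -2, -3, ?_, ?_, ?_, ?_, ?_, ?_, rfl⟩).symm <;>
        intro h
      exacts [h2 (by linear_combination h), h3 (by linear_combination h),
        h4 (by linear_combination h), one_ne_zero (by linear_combination h),
        h2 (by linear_combination h), one_ne_zero (by linear_combination h)]
    _ ≤ ((chordedCycleZMod n).neighborSet 0).encard := by
      refine Set.encard_le_encard ?_
      rintro _ (rfl | rfl | rfl | rfl)
      · exact adj_of_add_one_eq (zero_add 1)
      · exact (adj_of_add_one_eq (neg_add_cancel 1)).symm
      · exact adj_zero_neg_two hn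
      · exact adj_zero_neg_three hn

theorem commonNeighbors_zero_nonempty_iff (hn : 6 ≤ n) {y : ZMod n}
    (hy : (chordedCycleZMod n).Adj 0 y) :
    ((chordedCycleZMod n).commonNeighbors 0 y).Nonempty ↔ y ≠ 1 := by
  have : Fact (1 < n) := ⟨by omega⟩
  constructor
  · rintro ⟨w, h0, h1⟩ rfl
    have h0' : (chordedCycleZMod n).Adj 0 w := h0
    rcases eq_of_adj_of_ne_zero one_ne_zero h1 with rfl | rfl | rfl
    · have h3 := ZMod.ofNat_ne_zero_of_lt (n := n) 3 (by omega)
      have h4 := ZMod.ofNat_ne_zero_of_lt (n := n) 4 (by omega)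
      have h5 := ZMod.ofNat_ne_zero_of_lt (n := n) 5 (by omega)
      rcases eq_of_adj_zero h0' with h | h | h | h
      exacts [one_ne_zero (by linear_combination h), h3 (by linear_combination h),
        h4 (by linear_combination h), h5 (by linear_combination h)]
    · exact h0'.ne (sub_self 1).symm
    · exact h0'.ne rfl
  · intro hy1
    rcases eq_of_adj_zero hy with rfl | rfl | rfl | rfl
    · exact absurd rfl hy1
    · exact ⟨-2, adj_zero_neg_two hn, (adj_of_add_one_eq (by ring)).symm⟩
    · exact ⟨-1, (adj_of_add_one_eq (neg_add_cancel 1)).symm,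
        adj_of_add_one_eq (by ring)⟩
    · exact ⟨-2, adj_zero_neg_two hn, adj_of_add_one_eq (by ring)⟩

theorem iso_apply_zero (hn : 6 ≤ n) (f : chordedCycleZMod n ≃g chordedCycleZMod n) :
    f 0 = 0 := by
  have : Fact (1 < n) := ⟨by omega⟩
  by_contra h
  have := (four_le_encard_neighborSet_zero hn).trans
    ((f.encard_neighborSet 0).symm.trans_le (encard_neighborSet_le_three h))
  exact absurd this (by norm_num)

theorem iso_apply_one (hn : 6 ≤ n) (f : chordedCycleZMod n ≃g chordedCycleZMod n) :
    f 1 = 1 := by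
  have : Fact (1 < n) := ⟨by omega⟩
  have h01 : (chordedCycleZMod n).Adj 0 1 := adj_of_add_one_eq (zero_add 1)
  have h0 := iso_apply_zero hn f
  have hf1 : (chordedCycleZMod n).Adj 0 (f 1) := by simpa [h0] using f.map_adj_iff.2 h01
  by_contra h
  have := (commonNeighbors_zero_nonempty_iff hn hf1).2 h
  rw [← h0, f.commonNeighbors_nonempty_iff] at this
  exact (commonNeighbors_zero_nonempty_iff hn h01).1 this rfl

theorem isAsymmetric (hn : 6 ≤ n) : (chordedCycleZMod n).IsAsymmetric := by
  have : Fact (1 < n) := ⟨by omega⟩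
  have : NeZero n := ⟨by omega⟩
  exact fun f => f.apply_eq_self_of_apply_zero_of_apply_one (fun _ => adj_of_add_one_eq rfl)
    (fun _ _ hv h => eq_of_adj_of_ne_zero hv h) (iso_apply_zero hn f) (iso_apply_one hn f)

end chordedCycleZMod

end SimpleGraph

/-- For `n ≥ 6`, the asymmetric index of the cycle `C_n` is `2`. -/
theorem asymIndex_cycleGraph {n : ℕ} (hn : 6 ≤ n) :
    (SimpleGraph.cycleGraphZMod n).asymIndex = 2 := by
  refine le_antisymm (sInf_le ⟨_, SimpleGraph.chordedCycleZMod.isAsymmetric hn,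
    (SimpleGraph.chordedCycleZMod.encard_symmDiff_edgeSet hn).symm⟩) (le_sInf ?_)
  rintro _ ⟨G, hG, rfl⟩
  exact SimpleGraph.cycleGraphZMod.two_le_encard_symmDiff_edgeSet
    (ZMod.ofNat_ne_zero_of_lt 2 (by omega)) hG
end

section
/- For every n ≥ 8, the asymmetric index of the complete graph satisfies ai(K_n) ≤ n − 2. -/
theorem Function.Injective.apply_eq_self_of_forall_ne {α : Type*} {f : α → α}
    (hf : Function.Injective f) {a : α} (h : ∀ x, x ≠ a → f x = x) : f a = a := by
  by_contra hfa
  exact hfa (hf (h (f a) hfa))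

open scoped symmDiff

namespace SimpleGraph

variable {V W : Type*}

theorem edgeSet_symmDiff (G G' : SimpleGraph V) :
    (G ∆ G').edgeSet = G.edgeSet ∆ G'.edgeSet := by
  simp only [symmDiff_def, edgeSet_sup, edgeSet_sdiff]
  rfl

theorem IsAsymmetric.compl {G : SimpleGraph V} (hG : G.IsAsymmetric) : Gᶜ.IsAsymmetric :=
  fun f => hG ⟨f.toEquiv, (Embedding.complEquiv.symm f.toEmbedding).map_rel_iff⟩

theorem asymIndex_le_encard_symmDiff (G : SimpleGraph V) {G' : SimpleGraph V}
    (hG' : G'.IsAsymmetric) : G.asymIndex ≤ (G.edgeSet ∆ G'.edgeSet).encard :=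
  sInf_le ⟨G', hG', rfl⟩

theorem asymIndex_top_le {H : SimpleGraph V} (hH : H.IsAsymmetric) :
    (⊤ : SimpleGraph V).asymIndex ≤ H.edgeSet.encard := by
  simpa only [← edgeSet_symmDiff, top_symmDiff, hnot_eq_compl, compl_compl]
    using asymIndex_le_encard_symmDiff ⊤ hH.compl

theorem encard_edgeSet_fromEdgeSet_range {ι : Type*} [Preorder V] {c p : ι → V}
    (hc : Function.Injective c) (hp : ∀ i, p i < c i) :
    (fromEdgeSet (Set.range fun i => s(c i, p i))).edgeSet.encard = ENat.card ι := by
  have hinj : Function.Injective fun i => s(c i, p i) := by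
    intro i j hij
    rcases Sym2.eq_iff.mp hij with ⟨h, -⟩ | ⟨hcp, hpc⟩
    · exact hc h
    · exact absurd (calc c i = p j := hcp
        _ < c j := hp j
        _ = p i := hpc.symm
        _ < c i := hp i) (lt_irrefl _)
  have hdiag : Disjoint (Set.range fun i => s(c i, p i)) Sym2.diagSet := by
    rw [Set.disjoint_right]
    rintro _ hd ⟨i, rfl⟩
    exact (hp i).ne' (Sym2.mk_isDiag_iff.mp hd)
  rw [edgeSet_fromEdgeSet, hdiag.sdiff_eq_left, ← Set.image_univ,
    hinj.injOn.encard_image, Set.encard_univ]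

namespace Iso

variable {G : SimpleGraph V} {G' : SimpleGraph W}

theorem ncard_neighborSet_apply (f : G ≃g G') (v : V) :
    (G'.neighborSet (f v)).ncard = (G.neighborSet v).ncard := by
  rw [← f.image_neighborSet, Set.ncard_image_of_injective _ f.injective]

theorem apply_eq_self_of_adj_s15 (f : G ≃g G) {b c : V} (hb : f b = b)
    (hbc : G.Adj b c) (hfix : ∀ x, G.Adj b x → x ≠ c → f x = x) : f c = c := by
  by_contra hfc
  have hadj : G.Adj b (f c) := by simpa [hb] using f.map_adj_iff.mpr hbc
  exact hfc (f.injective (hfix (f c) hadj hfc))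

end Iso

/-- The spider with centre `2` and legs `1 - 0`, `n - 2` and `3 - ⋯ - (n - 3)`, plus the isolated
vertex `n - 1`. Its `i`-th edge joins `i + 1` to its parent `i`, except that `n - 2` hangs
from `2`. -/
def spider (n : ℕ) : SimpleGraph (Fin n) :=
  fromEdgeSet <| Set.range fun i : Fin (n - 2) =>
    s(⟨i + 1, by omega⟩, ⟨if (i : ℕ) = n - 3 then 2 else i, by split_ifs <;> omega⟩)

variable {n : ℕ}

theorem spider_adj {a b : Fin n} :
    (spider n).Adj a b ↔ (a : ℕ) ≠ b ∧
      ((b : ℕ) = a + 1 ∧ (b : ℕ) ≤ n - 3 ∨ (a : ℕ) = b + 1 ∧ (a : ℕ) ≤ n - 3 ∨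
        (a : ℕ) = 2 ∧ (b : ℕ) = n - 2 ∨ (b : ℕ) = 2 ∧ (a : ℕ) = n - 2) := by
  simp only [spider, fromEdgeSet_adj, Set.mem_range, Sym2.eq_iff, Fin.ext_iff, ne_eq]
  constructor
  · rintro ⟨⟨i, hi⟩, hne⟩
    have := i.isLt
    split_ifs at hi <;> omega
  · rintro ⟨hne, h⟩
    refine ⟨?_, hne⟩
    rcases h with h | h | h | h
    on_goal 1 => refine ⟨⟨a, by omega⟩, .inr ?_⟩
    on_goal 2 => refine ⟨⟨b, by omega⟩, .inl ?_⟩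
    on_goal 3 => refine ⟨⟨n - 3, by omega⟩, .inr ?_⟩
    on_goal 4 => refine ⟨⟨n - 3, by omega⟩, .inl ?_⟩
    all_goals
      dsimp only
      split_ifs <;> omega

theorem encard_edgeSet_spider (hn : 5 ≤ n) : (spider n).edgeSet.encard = (n - 2 : ℕ) := by
  rw [spider, encard_edgeSet_fromEdgeSet_range]
  · simp
  · intro i j h
    simpa [Fin.ext_iff] using h
  · intro i
    simp only [Fin.lt_def]
    split_ifs <;> omega

theorem two_lt_ncard_neighborSet_spider_iff (hn : 8 ≤ n) {v : Fin n} :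
    2 < ((spider n).neighborSet v).ncard ↔ (v : ℕ) = 2 := by
  rw [Set.two_lt_ncard_iff]
  simp only [mem_neighborSet, spider_adj, ne_eq, Fin.ext_iff]
  constructor
  · rintro ⟨a, b, c, ha, hb, hc, hab, hac, hbc⟩
    omega
  · intro hv
    exact ⟨⟨1, by omega⟩, ⟨3, by omega⟩, ⟨n - 2, by omega⟩, by dsimp only; omega⟩

theorem ncard_neighborSet_spider_eq_one_iff (hn : 8 ≤ n) {v : Fin n} :
    ((spider n).neighborSet v).ncard = 1 ↔
      (v : ℕ) = 0 ∨ (v : ℕ) = n - 3 ∨ (v : ℕ) = n - 2 := by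
  rw [Set.ncard_eq_one]
  constructor
  · rintro ⟨a, ha⟩
    have hnbr : ∀ x, (spider n).Adj v x ↔ x = a := fun x => by
      rw [← mem_neighborSet, ha, Set.mem_singleton_iff]
    have hva := spider_adj.mp ((hnbr a).mpr rfl)
    by_contra hv
    have hlo := (hnbr ⟨v - 1, by omega⟩).mp (spider_adj.mpr (by dsimp only; omega))
    have hhi := (hnbr ⟨v + 1, by omega⟩).mp (spider_adj.mpr (by dsimp only; omega))
    rw [Fin.ext_iff] at hlo hhi
    dsimp only at hlo hhi
    omega
  · rintro (hv | hv | hv)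
    on_goal 1 => refine ⟨⟨1, by omega⟩, ?_⟩
    on_goal 2 => refine ⟨⟨n - 4, by omega⟩, ?_⟩
    on_goal 3 => refine ⟨⟨2, by omega⟩, ?_⟩
    all_goals
      ext x
      simp only [mem_neighborSet, spider_adj, Set.mem_singleton_iff, Fin.ext_iff]
      omega

section Automorphism

variable (f : spider n ≃g spider n)

theorem spider_apply_val_eq_two (hn : 8 ≤ n) {v : Fin n} (hv : (v : ℕ) = 2) :
    (f v : ℕ) = 2 := by
  rw [← two_lt_ncard_neighborSet_spider_iff hn, f.ncard_neighborSet_apply]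
  exact (two_lt_ncard_neighborSet_spider_iff hn).mpr hv

theorem spider_apply_val_of_leaf (hn : 8 ≤ n) {v : Fin n}
    (hv : (v : ℕ) = 0 ∨ (v : ℕ) = n - 3 ∨ (v : ℕ) = n - 2) :
    (f v : ℕ) = 0 ∨ (f v : ℕ) = n - 3 ∨ (f v : ℕ) = n - 2 := by
  rw [← ncard_neighborSet_spider_eq_one_iff hn, f.ncard_neighborSet_apply]
  exact (ncard_neighborSet_spider_eq_one_iff hn).mpr hv

theorem spider_apply_pendant (hn : 8 ≤ n) {v : Fin n} (hv : (v : ℕ) = n - 2) : f v = v := by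
  let centre : Fin n := ⟨2, by omega⟩
  have hadj : (spider n).Adj v centre := spider_adj.mpr (by dsimp only [centre]; omega)
  have hadj_image := spider_adj.mp (f.map_adj_iff.mpr hadj)
  have hcentre := spider_apply_val_eq_two f hn (v := centre) rfl
  have hleaf := spider_apply_val_of_leaf f hn (.inr (.inr hv))
  exact Fin.ext (by omega)

theorem spider_apply_zero (hn : 8 ≤ n) {v : Fin n} (hv : (v : ℕ) = 0) : f v = v := by
  let one : Fin n := ⟨1, by omega⟩
  let centre : Fin n := ⟨2, by omega⟩
  let pendant : Fin n := ⟨n - 2, by omega⟩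
  have h01 : (spider n).Adj v one := spider_adj.mpr (by dsimp only [one]; omega)
  have h12 : (spider n).Adj one centre := spider_adj.mpr (by dsimp only [one, centre]; omega)
  have h01_image := spider_adj.mp (f.map_adj_iff.mpr h01)
  have h12_image := spider_adj.mp (f.map_adj_iff.mpr h12)
  have hcentre := spider_apply_val_eq_two f hn (v := centre) rfl
  have hleaf := spider_apply_val_of_leaf f hn (.inl hv)
  have hne : f v ≠ f pendant := f.injective.ne (Fin.ne_of_val_ne (by dsimp only [pendant]; omega))
  rw [spider_apply_pendant f hn (v := pendant) rfl, ne_eq, Fin.ext_iff] at hne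
  dsimp only [pendant] at hne
  -- `f v = n - 3` is impossible: `f one = n - 4` would then be a neighbour of the centre.
  exact Fin.ext (by omega)

theorem spider_apply_of_le (hn : 8 ≤ n) {v : Fin n} (hv : (v : ℕ) ≤ n - 3) : f v = v := by
  suffices ∀ k (hk : k < n), k ≤ n - 3 → f ⟨k, hk⟩ = ⟨k, hk⟩ from this v v.isLt hv
  intro k
  induction k using Nat.strong_induction_on with
  | _ k ih =>
  intro hk hv
  rcases k with _ | k
  · exact spider_apply_zero f hn rfl
  refine f.apply_eq_self_of_adj_s15 (b := ⟨k, by omega⟩) (ih k (by omega) _ (by omega))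
    (spider_adj.mpr (by dsimp only; omega)) fun x hx hne => ?_
  rw [spider_adj] at hx
  rw [ne_eq, Fin.ext_iff] at hne
  dsimp only at hx hne
  obtain hlt | hpendant : (x : ℕ) < k + 1 ∨ (x : ℕ) = n - 2 := by omega
  · exact ih x hlt x.isLt (by omega)
  · exact spider_apply_pendant f hn hpendant

end Automorphism

theorem spider_isAsymmetric (hn : 8 ≤ n) : (spider n).IsAsymmetric := by
  intro f
  have hfix : ∀ v : Fin n, (v : ℕ) ≠ n - 1 → f v = v := fun v hv =>
    if hle : (v : ℕ) ≤ n - 3 then spider_apply_of_le f hn hle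
    else spider_apply_pendant f hn (by omega)
  intro v
  by_cases hv : (v : ℕ) = n - 1
  · refine f.injective.apply_eq_self_of_forall_ne fun x hx => hfix x ?_
    rwa [← hv, ne_eq, ← Fin.ext_iff]
  · exact hfix v hv

end SimpleGraph

/-- For `n ≥ 8`, the asymmetric index of the complete graph satisfies
`ai(K_n) ≤ n - 2`. -/
theorem asymIndex_completeGraph_le {n : ℕ} (hn : 8 ≤ n) :
    (SimpleGraph.completeGraph (Fin n)).asymIndex ≤ ((n - 2 : ℕ) : ℕ∞) := by
  rw [← SimpleGraph.encard_edgeSet_spider (by omega)]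
  exact SimpleGraph.asymIndex_top_le (SimpleGraph.spider_isAsymmetric hn)
end
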